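/- Let F be an admissible entropy function, let ET_∞ denote the Entropy-Transport cost induced by F and the cost c_∞(x₁,x₂) = 0 if x₁ = x₂ and +∞ otherwise. Fix N > 1 and let C = max{F(1/N)/(1−1/N), F(N)/(N−1)}. Then for any finite measure μ on a Polish space X and any M with 1/N < M < N, one has ET_∞(μ, Mμ) ≤ C·μ(X)·|M−1|. -/

import Mathlib

open MeasureTheory ENNReal NNReal Filter Topology
open scoped Classical

/-- The `F`-divergence with recession constant `Finf`. -/
noncomputable def Fdiv {X : Type*} [MeasurableSpace X] (F : ℝ≥0∞ → ℝ≥0∞) (Finf : ℝ≥0∞)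
    (γ μ : Measure X) : ℝ≥0∞ :=
  (∫⁻ x, F (γ.rnDeriv μ x) ∂μ) + Finf * (γ.singularPart μ) Set.univ

/-- The Entropy-Transport cost induced by entropy `F` (recession constant `Finf`) and
cost function `c`. -/
noncomputable def ETCost {X : Type*} [MeasurableSpace X]
    (F : ℝ≥0∞ → ℝ≥0∞) (Finf : ℝ≥0∞) (c : X → X → ℝ≥0∞)
    (μ₁ μ₂ : Measure X) : ℝ≥0∞ :=
  ⨅ (γ : Measure (X × X)) (_ : IsFiniteMeasure γ),
    Fdiv F Finf (γ.map Prod.fst) μ₁ + Fdiv F Finf (γ.map Prod.snd) μ₂ +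
      ∫⁻ q, c q.1 q.2 ∂γ

/-- The pure-entropy cost: `0` on the diagonal and `+∞` off it. -/
noncomputable def pureCost (X : Type*) : X → X → ℝ≥0∞ :=
  fun x y => if x = y then 0 else ⊤

/-!
The plan `γ = (id, id)_# (M μ)` has marginals `M μ` and `M μ` and costs nothing under `c_∞`,
so `ET_∞(μ, M μ) ≤ F(M) μ(X) + F(1) M μ(X) = F(M) μ(X)`. Since `F` is convex with `F 1 = 0`,
it lies below its chord from `1` to `N` (for `M ≥ 1`) or from `1` to `1/N` (for `M < 1`), which
gives `F(M) ≤ C |M - 1|`.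
-/

section Divergence

variable {X : Type*} [MeasurableSpace X] (F : ℝ≥0∞ → ℝ≥0∞) (Finf : ℝ≥0∞)

theorem Fdiv_smul_self (μ : Measure X) [SigmaFinite μ] {r : ℝ≥0∞} (hr : r ≠ ∞) :
    Fdiv F Finf (r • μ) μ = F r * μ Set.univ := by
  have hrn : (r • μ).rnDeriv μ =ᵐ[μ] fun _ => r := by
    filter_upwards [Measure.rnDeriv_smul_left_of_ne_top' μ μ hr, Measure.rnDeriv_self μ]
      with x hsmul hself
    rw [hsmul, Pi.smul_apply, hself, smul_eq_mul, mul_one]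
  rw [Fdiv, Measure.singularPart_eq_zero_of_ac Measure.smul_absolutelyContinuous,
    lintegral_congr_ae (hrn.mono fun x hx => by rw [hx])]
  simp

theorem Fdiv_self (μ : Measure X) [SigmaFinite μ] :
    Fdiv F Finf μ μ = F 1 * μ Set.univ := by
  simpa using Fdiv_smul_self F Finf μ one_ne_top

theorem ETCost_pureCost_le (μ₁ μ₂ ν : Measure X) [IsFiniteMeasure ν] :
    ETCost F Finf (pureCost X) μ₁ μ₂ ≤ Fdiv F Finf ν μ₁ + Fdiv F Finf ν μ₂ := by
  have hdiag : Measurable (fun x : X => (x, x)) := measurable_id.prodMk measurable_id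
  set γ : Measure (X × X) := ν.map (fun x => (x, x))
  have hfst : γ.map Prod.fst = ν := by
    rw [Measure.map_map measurable_fst hdiag]
    exact Measure.map_id
  have hsnd : γ.map Prod.snd = ν := by
    rw [Measure.map_map measurable_snd hdiag]
    exact Measure.map_id
  -- `lintegral_map_le` needs no measurability of the cost, hence none of the diagonal.
  have hcost : ∫⁻ q, pureCost X q.1 q.2 ∂γ = 0 :=
    le_antisymm ((lintegral_map_le _ _).trans_eq (by simp [pureCost])) zero_le
  calc ETCost F Finf (pureCost X) μ₁ μ₂
      ≤ Fdiv F Finf (γ.map Prod.fst) μ₁ + Fdiv F Finf (γ.map Prod.snd) μ₂ +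
          ∫⁻ q, pureCost X q.1 q.2 ∂γ :=
        iInf₂_le γ (Measure.isFiniteMeasure_map ν _)
    _ = Fdiv F Finf ν μ₁ + Fdiv F Finf ν μ₂ := by rw [hfst, hsnd, hcost, add_zero]

end Divergence

section Chord

variable (F : ℝ≥0∞ → ℝ≥0∞)

theorem le_chord_of_mem_uIcc
    (hFconv : ∀ x y t : ℝ≥0∞, t ≤ 1 → F (t * x + (1 - t) * y) ≤ t * F x + (1 - t) * F y)
    (hF1 : F 1 = 0) {a M : ℝ} (ha : 0 ≤ a) (hM : M ∈ Set.uIcc 1 a) :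
    F (ENNReal.ofReal M) ≤
      F (ENNReal.ofReal a) / ENNReal.ofReal |a - 1| * ENNReal.ofReal |M - 1| := by
  rcases eq_or_ne a 1 with rfl | ha1
  · rw [Set.uIcc_self, Set.mem_singleton_iff] at hM
    simp [hM, hF1]
  have ha1' : 0 < |a - 1| := abs_pos.2 (sub_ne_zero.2 ha1)
  set s := |M - 1| / |a - 1| with hs
  have hs0 : 0 ≤ s := by positivity
  have hs1 : s ≤ 1 := (div_le_one ha1').2 (Set.abs_sub_left_of_mem_uIcc hM)
  -- `M - 1` and `a - 1` have the same sign, so `M = s a + (1 - s)`.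
  have hsM : s * (a - 1) = M - 1 := by
    rcases Set.mem_uIcc.1 hM with ⟨h1M, hMa⟩ | ⟨haM, hM1⟩
    · have : 0 < a - 1 := lt_of_le_of_ne (by linarith) (sub_ne_zero.2 ha1).symm
      rw [hs, abs_of_nonneg (by linarith : 0 ≤ M - 1), abs_of_pos this]
      field_simp
    · have : a - 1 < 0 := lt_of_le_of_ne (by linarith) (sub_ne_zero.2 ha1)
      rw [hs, abs_of_nonpos (by linarith : M - 1 ≤ 0), abs_of_neg this]
      field_simp
  have hrepr : ENNReal.ofReal s * ENNReal.ofReal a + (1 - ENNReal.ofReal s) * 1 =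
      ENNReal.ofReal M := by
    rw [← ENNReal.ofReal_one, ← ENNReal.ofReal_sub _ hs0, ← ENNReal.ofReal_mul hs0,
      ENNReal.ofReal_one, mul_one, ← ENNReal.ofReal_add (by positivity) (by linarith)]
    congr 1
    linarith
  calc F (ENNReal.ofReal M)
      ≤ ENNReal.ofReal s * F (ENNReal.ofReal a) + (1 - ENNReal.ofReal s) * F 1 := by
        rw [← hrepr]
        exact hFconv _ _ _ (ENNReal.ofReal_le_one.2 hs1)
    _ = ENNReal.ofReal |M - 1| / ENNReal.ofReal |a - 1| * F (ENNReal.ofReal a) := by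
        rw [hF1, mul_zero, add_zero, ENNReal.ofReal_div_of_pos ha1']
    _ = F (ENNReal.ofReal a) / ENNReal.ofReal |a - 1| * ENNReal.ofReal |M - 1| := by
        simp only [div_eq_mul_inv]
        ring

theorem le_max_slope_mul_abs_sub_one
    (hFconv : ∀ x y t : ℝ≥0∞, t ≤ 1 → F (t * x + (1 - t) * y) ≤ t * F x + (1 - t) * F y)
    (hF1 : F 1 = 0) {N M : ℝ} (hN : 1 < N) (hM₁ : 1 / N < M) (hM₂ : M < N) :
    F (ENNReal.ofReal M) ≤
      max (F (ENNReal.ofReal (1 / N)) / ENNReal.ofReal (1 - 1 / N))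
          (F (ENNReal.ofReal N) / ENNReal.ofReal (N - 1)) * ENNReal.ofReal |M - 1| := by
  rcases le_or_gt 1 M with h1M | hM1
  · calc F (ENNReal.ofReal M)
        ≤ F (ENNReal.ofReal N) / ENNReal.ofReal |N - 1| * ENNReal.ofReal |M - 1| :=
          le_chord_of_mem_uIcc F hFconv hF1 (by linarith) (Set.mem_uIcc.2 (.inl ⟨h1M, hM₂.le⟩))
      _ ≤ _ := by
          rw [abs_of_pos (sub_pos.2 hN)]
          gcongr
          exact le_max_right _ _
  · have hNinv : 1 / N < 1 := (div_lt_one (by linarith)).2 hN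
    calc F (ENNReal.ofReal M)
        ≤ F (ENNReal.ofReal (1 / N)) / ENNReal.ofReal |1 / N - 1| * ENNReal.ofReal |M - 1| :=
          le_chord_of_mem_uIcc F hFconv hF1 (by positivity)
            (Set.mem_uIcc.2 (.inr ⟨hM₁.le, hM1.le⟩))
      _ ≤ _ := by
          rw [abs_of_neg (sub_neg.2 hNinv), neg_sub]
          gcongr
          exact le_max_left _ _

end Chord

theorem pureEntropy_scaling_bound_general
    {X : Type*} [MeasurableSpace X]
    (F : ℝ≥0∞ → ℝ≥0∞) (Finf : ℝ≥0∞)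
    (hFconv : ∀ x y t : ℝ≥0∞, t ≤ 1 → F (t * x + (1 - t) * y) ≤ t * F x + (1 - t) * F y)
    (hF1 : F 1 = 0)
    (N : ℝ) (hN : 1 < N)
    (μ : Measure X) [IsFiniteMeasure μ]
    (M : ℝ) (hM₁ : 1 / N < M) (hM₂ : M < N) :
    ETCost F Finf (pureCost X) μ (ENNReal.ofReal M • μ) ≤
      max (F (ENNReal.ofReal (1 / N)) / ENNReal.ofReal (1 - 1 / N))
          (F (ENNReal.ofReal N) / ENNReal.ofReal (N - 1)) *
        μ Set.univ * ENNReal.ofReal |M - 1| := by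
  have : IsFiniteMeasure (ENNReal.ofReal M • μ) := μ.smul_finite ofReal_ne_top
  calc ETCost F Finf (pureCost X) μ (ENNReal.ofReal M • μ)
      ≤ Fdiv F Finf (ENNReal.ofReal M • μ) μ +
          Fdiv F Finf (ENNReal.ofReal M • μ) (ENNReal.ofReal M • μ) :=
        ETCost_pureCost_le F Finf _ _ _
    _ = F (ENNReal.ofReal M) * μ Set.univ := by
        rw [Fdiv_smul_self F Finf μ ofReal_ne_top, Fdiv_self, hF1, zero_mul, add_zero]
    _ ≤ _ := by
        rw [mul_right_comm]
        gcongr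
        exact le_max_slope_mul_abs_sub_one F hFconv hF1 hN hM₁ hM₂

/-- Let `F` be an admissible entropy function and `ET_∞` the
Entropy-Transport cost induced by `F` and the pure-entropy cost `c_∞`. Fix `N > 1` and
`C = max{F(1/N)/(1−1/N), F(N)/(N−1)}`. Then for any finite measure `μ` on a Polish space
and any `M` with `1/N < M < N`, one has `ET_∞(μ, Mμ) ≤ C·μ(X)·|M−1|`. -/
theorem pureEntropy_scaling_bound
    {X : Type*} [TopologicalSpace X] [PolishSpace X] [MeasurableSpace X] [BorelSpace X]
    (F : ℝ≥0∞ → ℝ≥0∞) (Finf : ℝ≥0∞)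
    (hFconv : ∀ x y t : ℝ≥0∞, t ≤ 1 → F (t * x + (1 - t) * y) ≤ t * F x + (1 - t) * F y)
    (hFlsc : LowerSemicontinuous F)
    (hF1 : F 1 = 0)
    (N : ℝ) (hN : 1 < N)
    (μ : Measure X) [IsFiniteMeasure μ]
    (M : ℝ) (hM₁ : 1 / N < M) (hM₂ : M < N) :
    ETCost F Finf (pureCost X) μ (ENNReal.ofReal M • μ) ≤
      max (F (ENNReal.ofReal (1 / N)) / ENNReal.ofReal (1 - 1 / N))
          (F (ENNReal.ofReal N) / ENNReal.ofReal (N - 1)) *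
        μ Set.univ * ENNReal.ofReal |M - 1| :=
  pureEntropy_scaling_bound_general F Finf hFconv hF1 N hN μ M hM₁ hM₂
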